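/- arXiv:1404.3876 — 4 statements merged into one kernel-verified Lean document; each statement's English description precedes it below -/
import Mathlib

section
/- Let M be a d×n integer matrix of full row rank d all of whose d×d minors lie in {-1,0,1} (a unimodular matrix). Then the Lebesgue volume of the zonotope Z(M) equals the number of subsets B ⊆ {1,…,n} of cardinality d such that the columns of M indexed by B are linearly independent, i.e., vol Z(M) equals the number of bases of the regular matroid represented by M. -/
open MeasureTheory

/-- The zonotope generated by a `d × n` real matrix: the image of the unit cube
`[0,1]^n` under the linear map `x ↦ M x`. -/
def zonotope {d n : ℕ} (M : Matrix (Fin d) (Fin n) ℝ) : Set (Fin d → ℝ) :=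
  {y | ∃ x : Fin n → ℝ, (∀ i, x i ∈ Set.Icc (0 : ℝ) 1) ∧ y = M.mulVec x}

/-!
Induction on the number of columns, by deletion and contraction of the last column `v`. If the
columns do not span, both sides vanish; if `v = 0`, it can be dropped. Otherwise `v` lies in a
basis of columns, whose `d × d` submatrix `A` has determinant `±1`; passing to `A⁻¹ M` changes
neither the volume nor the bases nor unimodularity, and turns `v` into the last unit vector `e`.
Then `Z(M) = Z(M ∖ e) + [0, e]`, and every nonempty slice of `Z(M ∖ e)` along `e` is an interval
that gets longer by exactly `1`, so `vol Z(M) = vol Z(M ∖ e) + vol Z(M / e)`: the projection of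
`Z(M ∖ e)` forgetting the last coordinate is `Z(M / e)`. The bases of `M` avoiding `e` are those of
`M ∖ e`, and those containing `e` correspond to the bases of `M / e`.
-/

open Set
open scoped Pointwise

section Parallelepiped

variable {E : Type*} [AddCommGroup E] [Module ℝ E] {n : ℕ}

theorem parallelepiped_fin_succ (v : Fin (n + 1) → E) :
    parallelepiped v = parallelepiped (v ∘ Fin.castSucc) + segment ℝ 0 (v (Fin.last n)) := by
  simp [parallelepiped_eq_sum_segment, Fin.sum_univ_castSucc]

theorem isCompact_parallelepiped [TopologicalSpace E] [IsTopologicalAddGroup E]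
    [ContinuousSMul ℝ E] (v : Fin n → E) : IsCompact (parallelepiped v) :=
  isCompact_Icc.image (by fun_prop)

end Parallelepiped

theorem Fin.snoc_add_smul_single_last {d : ℕ} (w : Fin d → ℝ) (t s : ℝ) :
    Fin.snoc w t + s • Pi.single (Fin.last d) 1 = (Fin.snoc w (t + s) : Fin (d + 1) → ℝ) := by
  ext i
  induction i using Fin.lastCases <;> simp [Fin.castSucc_ne_last]

theorem Real.volume_add_Icc_zero_one {S : Set ℝ} (hS : IsCompact S) (hconv : Convex ℝ S)
    (hne : S.Nonempty) : volume (S + Icc 0 1) = volume S + 1 := by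
  have hIcc := eq_Icc_of_connected_compact ⟨hne, hconv.isPreconnected⟩ hS
  have hle : sInf S ≤ sSup S := csInf_le_csSup hne hS.bddBelow hS.bddAbove
  rw [hIcc, Icc_add_Icc hle zero_le_one, Real.volume_Icc, Real.volume_Icc, ← ENNReal.ofReal_one,
    ← ENNReal.ofReal_add (sub_nonneg.2 hle) zero_le_one]
  ring_nf

section Slices

variable {d : ℕ}

theorem snoc_preimage_eq_image (K : Set (Fin (d + 1) → ℝ)) (w : Fin d → ℝ) :
    Fin.snoc (α := fun _ => ℝ) w ⁻¹' K = (· (Fin.last d)) '' (K ∩ Fin.init ⁻¹' {w}) := by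
  ext t
  constructor
  · intro ht
    exact ⟨Fin.snoc w t, ⟨ht, by simp⟩, by simp⟩
  · rintro ⟨x, ⟨hx, rfl⟩, rfl⟩
    simpa [mem_preimage, Fin.snoc_init_self] using hx

theorem IsCompact.snoc_preimage {K : Set (Fin (d + 1) → ℝ)} (hK : IsCompact K) (w : Fin d → ℝ) :
    IsCompact (Fin.snoc (α := fun _ => ℝ) w ⁻¹' K) := by
  rw [snoc_preimage_eq_image]
  exact (hK.inter_right (isClosed_singleton.preimage (by fun_prop))).image (by fun_prop)

theorem Convex.snoc_preimage {K : Set (Fin (d + 1) → ℝ)} (hK : Convex ℝ K) (w : Fin d → ℝ) :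
    Convex ℝ (Fin.snoc (α := fun _ => ℝ) w ⁻¹' K) := by
  rw [snoc_preimage_eq_image]
  exact (hK.inter ((convex_singleton w).linear_preimage
    (LinearMap.funLeft ℝ ℝ Fin.castSucc))).linear_image (LinearMap.proj (Fin.last d))

theorem snoc_preimage_add_segment (K : Set (Fin (d + 1) → ℝ)) (w : Fin d → ℝ) :
    Fin.snoc (α := fun _ => ℝ) w ⁻¹' (K + segment ℝ 0 (Pi.single (Fin.last d) 1)) =
      Fin.snoc (α := fun _ => ℝ) w ⁻¹' K + Icc 0 1 := by
  ext t
  simp only [mem_preimage, mem_add, segment_eq_image', mem_image, sub_zero, zero_add]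
  constructor
  · rintro ⟨k, hk, _, ⟨s, hs, rfl⟩, hks⟩
    have hk' : k = Fin.snoc w (t - s) := by
      rw [← sub_add_cancel t s, ← Fin.snoc_add_smul_single_last] at hks
      simpa using hks
    exact ⟨t - s, hk' ▸ hk, s, hs, by ring⟩
  · rintro ⟨a, ha, s, hs, rfl⟩
    exact ⟨_, ha, _, ⟨s, hs, rfl⟩, Fin.snoc_add_smul_single_last w a s⟩

theorem snoc_preimage_nonempty_iff (K : Set (Fin (d + 1) → ℝ)) (w : Fin d → ℝ) :
    (Fin.snoc (α := fun _ => ℝ) w ⁻¹' K).Nonempty ↔ w ∈ Fin.init '' K := by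
  simp [snoc_preimage_eq_image, Set.Nonempty, and_comm]

theorem volume_eq_lintegral_volume_snoc_preimage {S : Set (Fin (d + 1) → ℝ)}
    (hS : MeasurableSet S) : volume S = ∫⁻ w, volume (Fin.snoc (α := fun _ => ℝ) w ⁻¹' S) := by
  have hmp := (volume_preserving_piFinSuccAbove (fun _ : Fin (d + 1) => ℝ) (Fin.last d)).symm
  rw [← hmp.measure_preimage hS.nullMeasurableSet, Measure.volume_eq_prod,
    Measure.prod_apply_symm (hmp.measurable hS)]
  congr! with w
  ext t
  simp [MeasurableEquiv.piFinSuccAbove_symm_apply, Fin.insertNthEquiv, Fin.insertNth_last']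

end Slices

theorem volume_add_segment_single_last {d : ℕ} {K : Set (Fin (d + 1) → ℝ)} (hK : IsCompact K)
    (hconv : Convex ℝ K) :
    volume (K + segment ℝ 0 (Pi.single (Fin.last d) 1)) = volume K + volume (Fin.init '' K) := by
  have hinit : IsCompact (Fin.init '' K) := hK.image (by fun_prop)
  have hseg : IsCompact (segment ℝ 0 (Pi.single (Fin.last d) 1 : Fin (d + 1) → ℝ)) := by
    rw [segment_eq_image']
    exact isCompact_Icc.image (by fun_prop)
  have hslice (w : Fin d → ℝ) :
      volume (Fin.snoc (α := fun _ => ℝ) w ⁻¹' (K + segment ℝ 0 (Pi.single (Fin.last d) 1))) =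
        volume (Fin.snoc (α := fun _ => ℝ) w ⁻¹' K) + (Fin.init '' K).indicator 1 w := by
    rw [snoc_preimage_add_segment]
    by_cases hw : w ∈ Fin.init '' K
    · rw [Real.volume_add_Icc_zero_one (hK.snoc_preimage w) (hconv.snoc_preimage w)
        ((snoc_preimage_nonempty_iff K w).2 hw), indicator_of_mem hw, Pi.one_apply]
    · have hempty := not_nonempty_iff_eq_empty.1 (mt (snoc_preimage_nonempty_iff K w).1 hw)
      simp [hempty, hw]
  rw [volume_eq_lintegral_volume_snoc_preimage (hK.add hseg).isClosed.measurableSet,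
    volume_eq_lintegral_volume_snoc_preimage hK.isClosed.measurableSet, lintegral_congr hslice,
    lintegral_add_right _ (measurable_one.indicator hinit.isClosed.measurableSet),
    lintegral_indicator_one hinit.isClosed.measurableSet]

section LinearIndependence

variable {𝕜 V W ι ι' : Type*} [Field 𝕜] [AddCommGroup V] [Module 𝕜 V] [AddCommGroup W]
  [Module 𝕜 W]

theorem linearIndepOn_image_iff {v : ι → V} {f : ι' → ι} {s : Set ι'} (hf : InjOn f s) :
    LinearIndepOn 𝕜 v (f '' s) ↔ LinearIndepOn 𝕜 (v ∘ f) s :=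
  ⟨fun h => h.comp_of_image hf, LinearIndepOn.image_of_comp _ _⟩

theorem linearIndepOn_insert_iff_comp_of_ker_eq_span {v : ι → V} {s : Set ι} {a : ι}
    (has : a ∉ s) (hva : v a ≠ 0) {P : V →ₗ[𝕜] W} (hker : LinearMap.ker P = 𝕜 ∙ v a) :
    LinearIndepOn 𝕜 v (insert a s) ↔ LinearIndepOn 𝕜 (P ∘ v) s := by
  rw [linearIndepOn_insert has, ← Submodule.disjoint_span_singleton' hva, ← hker]
  refine ⟨fun ⟨hv, hdisj⟩ => hv.map_injOn P (LinearMap.injOn_of_disjoint_ker le_rfl hdisj),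
    fun h => ⟨h.of_comp P, ?_⟩⟩
  rw [image_eq_range]
  exact Submodule.range_ker_disjoint h

end LinearIndependence

theorem LinearMap.ker_funLeft_castSucc (𝕜 : Type*) [Field 𝕜] (d : ℕ) :
    LinearMap.ker (LinearMap.funLeft 𝕜 𝕜 (Fin.castSucc : Fin d → Fin (d + 1))) =
      𝕜 ∙ Pi.single (Fin.last d) 1 := by
  ext y
  simp only [LinearMap.mem_ker, Submodule.mem_span_singleton]
  constructor
  · intro h
    refine ⟨y (Fin.last d), funext fun i => ?_⟩
    induction i using Fin.lastCases with
    | last => simp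
    | cast i => simpa [Fin.castSucc_ne_last] using (congrFun h i).symm
  · rintro ⟨c, rfl⟩
    ext i
    simp [Fin.castSucc_ne_last]

theorem Fin.last_notMem_map_castSuccEmb {n : ℕ} (B : Finset (Fin n)) :
    Fin.last n ∉ B.map Fin.castSuccEmb := by
  simp [Fin.castSucc_ne_last]

theorem Set.ncard_eq_ncard_map_castSuccEmb_add {n : ℕ} (S : Set (Finset (Fin (n + 1)))) :
    S.ncard = {B : Finset (Fin n) | B.map Fin.castSuccEmb ∈ S}.ncard +
      {B : Finset (Fin n) | insert (Fin.last n) (B.map Fin.castSuccEmb) ∈ S}.ncard := by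
  set φ : Finset (Fin n) → Finset (Fin (n + 1)) := fun B => B.map Fin.castSuccEmb
  set ψ : Finset (Fin n) → Finset (Fin (n + 1)) := fun B => insert (Fin.last n) (φ B)
  have hψ : Function.Injective ψ := fun B₁ B₂ h => by
    simpa [ψ, φ, Finset.erase_insert (Fin.last_notMem_map_castSuccEmb _)] using
      congrArg (Finset.erase · (Fin.last n)) h
  have hdisj : Disjoint (range φ) (range ψ) := by
    rw [disjoint_left]
    rintro _ ⟨B₁, rfl⟩ ⟨B₂, h⟩
    exact Fin.last_notMem_map_castSuccEmb B₁ (h ▸ Finset.mem_insert_self _ _ : Fin.last n ∈ φ B₁)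
  have hcover : range φ ∪ range ψ = univ := by
    refine eq_univ_of_forall fun B => ?_
    have hB : φ (B.preimage Fin.castSucc (Fin.castSucc_injective n).injOn) =
        B.erase (Fin.last n) := by
      ext j
      induction j using Fin.lastCases <;> simp [φ, Fin.castSucc_ne_last]
    by_cases h : Fin.last n ∈ B
    · exact Or.inr ⟨_, (congrArg _ hB).trans (Finset.insert_erase h)⟩
    · exact Or.inl ⟨_, hB.trans (Finset.erase_eq_of_notMem h)⟩
  calc S.ncard = (S ∩ range φ ∪ S ∩ range ψ).ncard := by
        rw [← inter_union_distrib_left, hcover, inter_univ]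
    _ = (φ '' (φ ⁻¹' S)).ncard + (ψ '' (ψ ⁻¹' S)).ncard := by
        rw [ncard_union_eq (hdisj.mono inter_subset_right inter_subset_right),
          image_preimage_eq_inter_range, image_preimage_eq_inter_range]
    _ = _ := by
        rw [ncard_image_of_injective _ (Finset.map_injective _), ncard_image_of_injective _ hψ]
        rfl

namespace Matrix

variable {𝕜 : Type*} [Field 𝕜] {d n : ℕ}

def bases (M : Matrix (Fin d) (Fin n) 𝕜) : Set (Finset (Fin n)) :=
  {B | B.card = d ∧ LinearIndepOn 𝕜 M.col (B : Set (Fin n))}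

theorem col_mul {R l m o : Type*} [CommSemiring R] [Fintype m] [Fintype o] [DecidableEq o]
    (W : Matrix l m R) (M : Matrix m o R) (j : o) :
    (W * M).col j = W *ᵥ M.col j := by
  rw [← mulVec_single_one, ← mulVec_mulVec, mulVec_single_one]

theorem bases_mul_of_isUnit_det (W : Matrix (Fin d) (Fin d) 𝕜) (hW : IsUnit W.det)
    (M : Matrix (Fin d) (Fin n) 𝕜) : (W * M).bases = M.bases := by
  have hinj : Function.Injective W.mulVecLin :=
    mulVec_injective_iff_isUnit.2 ((isUnit_iff_isUnit_det W).2 hW)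
  ext B
  refine and_congr_right fun _ => ?_
  have hcol : (W * M).col = W.mulVecLin ∘ M.col := funext (col_mul W M)
  rw [hcol, LinearMap.linearIndepOn_iff_of_injOn _ hinj.injOn]

theorem card_le_rank_of_linearIndepOn {M : Matrix (Fin d) (Fin n) 𝕜} {B : Finset (Fin n)}
    (hB : LinearIndepOn 𝕜 M.col (B : Set (Fin n))) : B.card ≤ M.rank := by
  rw [rank_eq_finrank_span_cols]
  calc B.card = Module.finrank 𝕜 (Submodule.span 𝕜 (M.col '' B)) := by
        rw [image_eq_range, finrank_span_eq_card hB]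
        simp
    _ ≤ _ := Submodule.finrank_mono (Submodule.span_mono (image_subset_range _ _))

theorem bases_eq_empty_of_rank_lt {M : Matrix (Fin d) (Fin n) 𝕜} (h : M.rank < d) :
    M.bases = ∅ :=
  eq_empty_of_forall_notMem fun _ ⟨hcard, hB⟩ =>
    (hcard ▸ card_le_rank_of_linearIndepOn hB).not_gt h

theorem bases_of_fin_zero (M : Matrix (Fin 0) (Fin n) 𝕜) : M.bases = {∅} := by
  ext B
  simp +contextual [bases, Finset.card_eq_zero]

theorem map_castSuccEmb_mem_bases_iff (M : Matrix (Fin d) (Fin (n + 1)) 𝕜) (B : Finset (Fin n)) :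
    B.map Fin.castSuccEmb ∈ M.bases ↔ B ∈ (M.submatrix id Fin.castSucc).bases := by
  simp only [bases, mem_ofPred_eq, Finset.card_map, Finset.coe_map, Fin.coe_castSuccEmb,
    linearIndepOn_image_iff (Fin.castSucc_injective n).injOn]
  rfl

theorem insert_last_map_castSuccEmb_mem_bases_iff {M : Matrix (Fin (d + 1)) (Fin (n + 1)) 𝕜}
    (hM : M.col (Fin.last n) = Pi.single (Fin.last d) 1) (B : Finset (Fin n)) :
    insert (Fin.last n) (B.map Fin.castSuccEmb) ∈ M.bases ↔
      B ∈ (M.submatrix Fin.castSucc Fin.castSucc).bases := by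
  have hlast : Fin.last n ∉ Fin.castSucc '' (B : Set (Fin n)) := by
    simp [Fin.castSucc_ne_last]
  have hcol : M.col (Fin.last n) ≠ 0 := by simp [hM]
  simp only [bases, mem_ofPred_eq,
    Finset.card_insert_of_notMem (Fin.last_notMem_map_castSuccEmb B), Finset.card_map,
    Nat.add_right_cancel_iff, Finset.coe_insert, Finset.coe_map, Fin.coe_castSuccEmb,
    linearIndepOn_insert_iff_comp_of_ker_eq_span hlast hcol
      (hM ▸ LinearMap.ker_funLeft_castSucc 𝕜 d),
    linearIndepOn_image_iff (Fin.castSucc_injective n).injOn]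
  rfl

theorem insert_notMem_bases_of_col_eq_zero {M : Matrix (Fin d) (Fin n) 𝕜} {j : Fin n}
    (hj : M.col j = 0) (B : Finset (Fin n)) : insert j B ∉ M.bases :=
  fun ⟨_, hB⟩ => hB.ne_zero (by simp) hj

theorem ncard_bases_succ (M : Matrix (Fin d) (Fin (n + 1)) 𝕜) :
    M.bases.ncard = (M.submatrix id Fin.castSucc).bases.ncard +
      {B : Finset (Fin n) | insert (Fin.last n) (B.map Fin.castSuccEmb) ∈ M.bases}.ncard := by
  rw [ncard_eq_ncard_map_castSuccEmb_add]
  simp only [map_castSuccEmb_mem_bases_iff]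
  rfl

theorem ncard_bases_of_col_last_eq_single {M : Matrix (Fin (d + 1)) (Fin (n + 1)) 𝕜}
    (hM : M.col (Fin.last n) = Pi.single (Fin.last d) 1) :
    M.bases.ncard = (M.submatrix id Fin.castSucc).bases.ncard +
      (M.submatrix Fin.castSucc Fin.castSucc).bases.ncard := by
  simp only [ncard_bases_succ, insert_last_map_castSuccEmb_mem_bases_iff hM, ofPred_mem_eq]

def IsUnimodular {R : Type*} [CommRing R] (M : Matrix (Fin d) (Fin n) R) : Prop :=
  ∀ f : Fin d → Fin n, Function.Injective f → (M.submatrix id f).det ∈ ({-1, 0, 1} : Set R)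

namespace IsUnimodular

variable {R : Type*} [CommRing R] {M : Matrix (Fin d) (Fin n) R}

theorem submatrix {m : ℕ} (hM : M.IsUnimodular) {g : Fin m → Fin n} (hg : Function.Injective g) :
    (M.submatrix id g).IsUnimodular := fun f hf => hM (g ∘ f) (hg.comp hf)

theorem mul_left (hM : M.IsUnimodular) {W : Matrix (Fin d) (Fin d) R}
    (hW : W.det = 1 ∨ W.det = -1) : (W * M).IsUnimodular := fun f hf => by
  have hmul : (W * M).submatrix id f = W * M.submatrix id f := rfl
  have hdet := hM f hf
  simp only [Set.mem_insert_iff, Set.mem_singleton_iff] at hdet ⊢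
  rw [hmul, det_mul]
  rcases hdet with h | h | h <;> rcases hW with hW | hW <;> simp [h, hW]

theorem det_submatrix_snoc_last {D : ℕ} {M : Matrix (Fin (D + 1)) (Fin (n + 1)) R}
    (hM : M.col (Fin.last n) = Pi.single (Fin.last D) 1) (f : Fin D → Fin n) :
    (M.submatrix id (Fin.snoc (Fin.castSucc ∘ f) (Fin.last n))).det =
      ((M.submatrix Fin.castSucc Fin.castSucc).submatrix id f).det := by
  rw [det_succ_column _ (Fin.last D), Fin.sum_univ_castSucc]
  have hcol (i : Fin (D + 1)) :
      M i (Fin.last n) = (Pi.single (Fin.last D) 1 : Fin (D + 1) → R) i :=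
    congrFun hM i
  simp [hcol, Fin.castSucc_ne_last]

theorem submatrix_castSucc_castSucc {D : ℕ} {M : Matrix (Fin (D + 1)) (Fin (n + 1)) R}
    (hM : M.IsUnimodular) (hcol : M.col (Fin.last n) = Pi.single (Fin.last D) 1) :
    (M.submatrix Fin.castSucc Fin.castSucc).IsUnimodular := fun f hf => by
  rw [← det_submatrix_snoc_last hcol]
  exact hM _ (Fin.snoc_injective_iff.2
    ⟨(Fin.castSucc_injective n).comp hf, by simp [Fin.castSucc_ne_last]⟩)

end IsUnimodular

theorem exists_isUnit_det_submatrix {M : Matrix (Fin d) (Fin n) 𝕜} (hrank : M.rank = d)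
    {j : Fin n} (hj : M.col j ≠ 0) (i : Fin d) :
    ∃ f : Fin d → Fin n, Function.Injective f ∧ f i = j ∧ IsUnit (M.submatrix id f).det := by
  classical
  obtain ⟨b, -, hjb, hspan, hli⟩ :=
    exists_linearIndepOn_extension ((linearIndepOn_singleton_iff 𝕜).2 hj) (Set.subset_univ {j})
  have htop : Submodule.span 𝕜 (M.col '' b) = ⊤ := by
    refine eq_top_mono (Submodule.span_le.2 (Set.image_univ ▸ hspan)) ?_
    exact Submodule.eq_top_of_finrank_eq (by rw [← rank_eq_finrank_span_cols, hrank,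
      Module.finrank_fin_fun])
  have hcard : Fintype.card b = d := by
    rw [← finrank_span_eq_card hli, ← Set.image_eq_range, htop, finrank_top,
      Module.finrank_fin_fun]
  let e₀ : Fin d ≃ b := (Fintype.equivFinOfCardEq hcard).symm
  let e : Fin d ≃ b := (Equiv.swap i (e₀.symm ⟨j, hjb rfl⟩)).trans e₀
  refine ⟨Subtype.val ∘ e, Subtype.val_injective.comp e.injective, by simp [e], ?_⟩
  rw [← isUnit_iff_isUnit_det, ← linearIndependent_cols_iff_isUnit]
  exact hli.comp e e.injective

theorem IsUnimodular.exists_mul_col_eq_single {M : Matrix (Fin d) (Fin n) 𝕜}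
    (hM : M.IsUnimodular) (hrank : M.rank = d) {j : Fin n} (hj : M.col j ≠ 0) (i : Fin d) :
    ∃ W : Matrix (Fin d) (Fin d) 𝕜, (W.det = 1 ∨ W.det = -1) ∧ (W * M).col j = Pi.single i 1 := by
  obtain ⟨f, hf, rfl, hunit⟩ := exists_isUnit_det_submatrix hrank hj i
  set A := M.submatrix id f
  have hA : A.det = 1 ∨ A.det = -1 := by
    rcases hM f hf with h | h | h
    · exact Or.inr h
    · exact absurd h hunit.ne_zero
    · exact Or.inl h
  refine ⟨A⁻¹, ?_, ?_⟩
  · rw [det_nonsing_inv, Ring.inverse_eq_inv']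
    rcases hA with h | h <;> simp [h]
  · rw [col_mul, show M.col (f i) = A.col i from rfl, ← mulVec_single_one A, mulVec_mulVec,
      nonsing_inv_mul _ hunit, one_mulVec]

end Matrix

section Zonotope

variable {d n : ℕ}

theorem zonotope_eq_parallelepiped (M : Matrix (Fin d) (Fin n) ℝ) :
    zonotope M = parallelepiped M.col := by
  ext y
  simp only [zonotope, mem_parallelepiped_iff, ← Set.pi_univ_Icc, Set.mem_univ_pi, Pi.zero_apply,
    Pi.one_apply]
  refine exists_congr fun x => and_congr_right fun _ => ?_
  rw [Matrix.mulVec_eq_sum]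
  simp only [op_smul_eq_smul]
  rfl

theorem zonotope_succ (M : Matrix (Fin d) (Fin (n + 1)) ℝ) :
    zonotope M = zonotope (M.submatrix id Fin.castSucc) + segment ℝ 0 (M.col (Fin.last n)) := by
  rw [zonotope_eq_parallelepiped, zonotope_eq_parallelepiped, parallelepiped_fin_succ]
  rfl

theorem init_image_zonotope (M : Matrix (Fin (d + 1)) (Fin n) ℝ) :
    Fin.init '' zonotope M = zonotope (M.submatrix Fin.castSucc id) := by
  rw [zonotope_eq_parallelepiped, zonotope_eq_parallelepiped]
  exact image_parallelepiped (LinearMap.funLeft ℝ ℝ Fin.castSucc) M.col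

theorem isCompact_zonotope (M : Matrix (Fin d) (Fin n) ℝ) : IsCompact (zonotope M) :=
  zonotope_eq_parallelepiped M ▸ isCompact_parallelepiped M.col

theorem convex_zonotope (M : Matrix (Fin d) (Fin n) ℝ) : Convex ℝ (zonotope M) :=
  zonotope_eq_parallelepiped M ▸ convex_parallelepiped M.col

theorem volume_zonotope_mul (W : Matrix (Fin d) (Fin d) ℝ) (M : Matrix (Fin d) (Fin n) ℝ) :
    volume (zonotope (W * M)) = ENNReal.ofReal |W.det| * volume (zonotope M) := by
  have himage : zonotope (W * M) = W.mulVecLin '' zonotope M := by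
    rw [zonotope_eq_parallelepiped, zonotope_eq_parallelepiped, image_parallelepiped]
    exact congrArg parallelepiped (funext (Matrix.col_mul W M))
  rw [himage, Measure.addHaar_image_linearMap, ← Matrix.toLin'_apply', LinearMap.det_toLin']

theorem volume_zonotope_of_rank_lt {M : Matrix (Fin d) (Fin n) ℝ} (h : M.rank < d) :
    volume (zonotope M) = 0 := by
  refine measure_mono_null ?_ (Measure.addHaar_submodule _ (LinearMap.range M.mulVecLin) ?_)
  · rintro _ ⟨x, -, rfl⟩
    exact LinearMap.mem_range_self M.mulVecLin x
  · intro htop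
    rw [Matrix.rank, htop, finrank_top, Module.finrank_fin_fun] at h
    exact h.false

theorem volume_zonotope_of_fin_zero (M : Matrix (Fin 0) (Fin n) ℝ) :
    volume (zonotope M) = 1 := by
  have hne : (zonotope M).Nonempty := ⟨0, 0, fun _ => ⟨le_rfl, zero_le_one⟩, Subsingleton.elim _ _⟩
  rw [Subsingleton.eq_univ_of_nonempty hne]
  simp [volume_pi]

theorem volume_zonotope_of_col_last_eq_single {M : Matrix (Fin (d + 1)) (Fin (n + 1)) ℝ}
    (hM : M.col (Fin.last n) = Pi.single (Fin.last d) 1) :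
    volume (zonotope M) = volume (zonotope (M.submatrix id Fin.castSucc)) +
      volume (zonotope (M.submatrix Fin.castSucc Fin.castSucc)) := by
  rw [zonotope_succ, hM,
    volume_add_segment_single_last (isCompact_zonotope _) (convex_zonotope _), init_image_zonotope]
  rfl

end Zonotope

open Matrix in
theorem volume_zonotope_eq_ncard_bases {d n : ℕ} (M : Matrix (Fin d) (Fin n) ℝ)
    (hM : M.IsUnimodular) : volume (zonotope M) = M.bases.ncard := by
  induction n generalizing d with
  | zero =>
    obtain _ | D := d
    · simp [volume_zonotope_of_fin_zero, bases_of_fin_zero]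
    have hrank : M.rank < D + 1 := M.rank_le_width.trans_lt D.succ_pos
    simp [volume_zonotope_of_rank_lt hrank, bases_eq_empty_of_rank_lt hrank]
  | succ n ih =>
    obtain _ | D := d
    · simp [volume_zonotope_of_fin_zero, bases_of_fin_zero]
    obtain hrank | hrank := M.rank_le_height.lt_or_eq
    · simp [volume_zonotope_of_rank_lt hrank, bases_eq_empty_of_rank_lt hrank]
    by_cases hcol : M.col (Fin.last n) = 0
    · rw [zonotope_succ, hcol, segment_same, singleton_zero, add_zero,
        ih _ (hM.submatrix (Fin.castSucc_injective n)), ncard_bases_succ]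
      simp [insert_notMem_bases_of_col_eq_zero hcol]
    obtain ⟨W, hW, hWcol⟩ := hM.exists_mul_col_eq_single hrank hcol (Fin.last D)
    have hWM := hM.mul_left hW
    have hdet : |W.det| = 1 := by rcases hW with h | h <;> simp [h]
    calc volume (zonotope M) = volume (zonotope (W * M)) := by
          rw [volume_zonotope_mul, hdet, ENNReal.ofReal_one, one_mul]
      _ = (W * M).bases.ncard := by
          rw [volume_zonotope_of_col_last_eq_single hWcol, ncard_bases_of_col_last_eq_single hWcol,
            ih _ (hWM.submatrix (Fin.castSucc_injective n)),
            ih _ (hWM.submatrix_castSucc_castSucc hWcol), Nat.cast_add]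
      _ = M.bases.ncard := by
          rw [bases_mul_of_isUnit_det W (isUnit_iff_ne_zero.2 (abs_pos.1 (hdet ▸ one_pos)))]

theorem stmt3_general (d n : ℕ) (M : Matrix (Fin d) (Fin n) ℝ)
    (huni : ∀ f : Fin d → Fin n, Function.Injective f →
      (M.submatrix id f).det ∈ ({-1, 0, 1} : Set ℝ)) :
    volume (zonotope M) =
      ({B : Finset (Fin n) | B.card = d ∧
        LinearIndependent ℝ (fun j : B => fun i => M i j)}.ncard : ENNReal) :=
  volume_zonotope_eq_ncard_bases M huni

/-- For a full row rank unimodular integer matrix `M`, the Lebesgue volume of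
the zonotope `Z(M)` equals the number of bases of the regular matroid
represented by `M`, i.e. the number of `d`-element sets of column indices whose
columns are linearly independent. -/
theorem stmt3 (d n : ℕ) (M : Matrix (Fin d) (Fin n) ℝ)
    (hint : ∀ i j, ∃ z : ℤ, M i j = (z : ℝ))
    (hrank : M.rank = d)
    (huni : ∀ f : Fin d → Fin n, Function.Injective f →
      (M.submatrix id f).det ∈ ({-1, 0, 1} : Set ℝ)) :
    volume (zonotope M) =
      ({B : Finset (Fin n) | B.card = d ∧
        LinearIndependent ℝ (fun j : B => fun i => M i j)}.ncard : ENNReal) :=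
  stmt3_general d n M huni
end

section
/- Let M be a d×n integer matrix of rank r all of whose r×r minors lie in {-1,0,1} (a unimodular matrix). If v is a nonzero vector in the real row space of M whose support is minimal with respect to inclusion among the supports of nonzero vectors of the row space, then the coordinatewise sign vector σ of v (σ_i = 1 if v_i > 0, σ_i = −1 if v_i < 0, σ_i = 0 if v_i = 0) also lies in the row space of M, and v is a positive scalar multiple of σ. -/
/-!
Pick `r` independent rows `A` of `M`; they span the row space `W`, and `v = y₀ ᵥ* A`. By
minimality, the vectors of `W` vanishing on the zero set `Z` of `v` form the line through `v`, so
the columns of `A` indexed by `Z` span the hyperplane `y₀ᗮ` of `Kʳ`; choose `r - 1` independent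
ones among them. Completing them by column `j` gives an `r × r` minor `u j`, which is linear in
column `j`, so `u ∈ W`. It vanishes iff column `j` lies in `y₀ᗮ`, i.e. iff `v j = 0`, and by
unimodularity `u j ∈ {-1, 0, 1}`. Minimality once more gives `u = c • v`, so `v` is a positive
multiple of its sign vector, which is `± u ∈ W`.
-/

open Submodule Module Matrix

section

variable {K ι V : Type*} [Field K]

def IsSupportMinimal (W : Submodule K (ι → K)) (v : ι → K) : Prop :=
  ∀ w ∈ W, w ≠ 0 → {i | w i ≠ 0} ⊆ {i | v i ≠ 0} → {i | w i ≠ 0} = {i | v i ≠ 0}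

theorem exists_smul_eq_of_support_subset {W : Submodule K (ι → K)} {v w : ι → K}
    (hv : v ∈ W) (hv0 : v ≠ 0) (hmin : IsSupportMinimal W v) (hw : w ∈ W)
    (hwv : ∀ i, v i = 0 → w i = 0) : ∃ c : K, w = c • v := by
  obtain ⟨i₀, hi₀⟩ := Function.ne_iff.mp hv0
  refine ⟨w i₀ / v i₀, by_contra fun hne => ?_⟩
  have hsupp := hmin _ (W.sub_mem hw (W.smul_mem _ hv)) (sub_ne_zero.mpr hne) fun i hi hvi => by
    simp [hwv i hvi, hvi] at hi
  have : i₀ ∈ {i | (w - (w i₀ / v i₀) • v) i ≠ 0} := hsupp ▸ hi₀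
  simp [div_mul_cancel₀ _ hi₀] at this

theorem exists_linearIndependent_fin [AddCommGroup V] [Module K V] [Finite ι] (u : ι → V)
    {m : ℕ} (hm : finrank K (span K (Set.range u)) = m) :
    ∃ g : Fin m → ι, Function.Injective g ∧ LinearIndependent K (u ∘ g) ∧
      span K (Set.range (u ∘ g)) = span K (Set.range u) := by
  obtain ⟨κ, a, ha, hspan, hli⟩ := exists_linearIndependent' K u
  have : Fintype κ := have := Finite.of_injective a ha; Fintype.ofFinite κ
  let e : Fin m ≃ κ :=
    (Fintype.equivFinOfCardEq (by rw [← finrank_span_eq_card hli, hspan, hm])).symm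
  refine ⟨a ∘ e, ha.comp e.injective, hli.comp e e.injective, ?_⟩
  rw [← hspan, ← Function.comp_assoc, EquivLike.range_comp]

theorem det_of_snoc_eq_zero_iff {m : ℕ} {w : Fin m → Fin (m + 1) → K}
    (hw : LinearIndependent K w) (x : Fin (m + 1) → K) :
    (of (Fin.snoc w x)).det = 0 ↔ x ∈ span K (Set.range w) := by
  rw [← not_iff_not, ← ne_eq, ← isUnit_iff_ne_zero, ← isUnit_iff_isUnit_det,
    ← linearIndependent_rows_iff_isUnit]
  exact linearIndependent_finSnoc.trans (and_iff_right hw)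

theorem transpose_submatrix_snoc {m : ℕ} {α : Type*} (A : Matrix (Fin (m + 1)) ι α)
    (g : Fin m → ι) (j : ι) :
    (A.submatrix id (Fin.snoc g j))ᵀ = of (Fin.snoc (A.col ∘ g) (A.col j)) := by
  ext k i
  simp only [transpose_apply, submatrix_apply, of_apply, ← Fin.comp_snoc]
  rfl

theorem det_submatrix_snoc_mem_span_row [Fintype ι] {m : ℕ} (A : Matrix (Fin (m + 1)) ι K)
    (g : Fin m → ι) :
    (fun j => (A.submatrix id (Fin.snoc g j)).det) ∈ span K (Set.range A.row) := by
  let φ := (detRowAlternating (n := Fin (m + 1)) (R := K)).toMultilinearMap.toLinearMap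
    (Fin.snoc (A.col ∘ g) 0) (Fin.last m)
  have hφ : ∀ j, (A.submatrix id (Fin.snoc g j)).det = φ (A.col j) := fun j => by
    rw [← det_transpose, transpose_submatrix_snoc]
    simp only [φ, MultilinearMap.toLinearMap_apply, AlternatingMap.coe_multilinearMap,
      Fin.update_snoc_last]
    rfl
  rw [← range_vecMulLinear]
  refine ⟨fun i => φ fun k => if i = k then 1 else 0, funext fun j => ?_⟩
  rw [hφ, LinearMap.pi_apply_eq_sum_univ φ]
  simp [vecMul, dotProduct, mul_comm]

theorem finrank_span_col_zero_add_one [Fintype ι] {r : ℕ} {A : Matrix (Fin r) ι K}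
    (hA : LinearIndependent K A.row) {v : ι → K} (hv : v ∈ span K (Set.range A.row))
    (hv0 : v ≠ 0)
    (hmin : IsSupportMinimal (span K (Set.range A.row)) v) :
    finrank K (span K (Set.range fun j : {j // v j = 0} => A.col j)) + 1 = r := by
  classical
  let B := A.submatrix id (Subtype.val : {j // v j = 0} → ι)
  have hB : ∀ y, Bᵀ *ᵥ y = fun j => (y ᵥ* A) j.1 := fun y => by
    rw [mulVec_transpose]; rfl
  rw [← range_vecMulLinear] at hv
  obtain ⟨y₀, rfl⟩ : ∃ y₀, y₀ ᵥ* A = v := hv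
  have hy₀ : y₀ ≠ 0 := by rintro rfl; simp at hv0
  have hker : LinearMap.ker Bᵀ.mulVecLin = span K {y₀} := by
    ext y
    rw [LinearMap.mem_ker, mulVecLin_apply, hB, mem_span_singleton]
    constructor
    · intro hy
      obtain ⟨c, hc⟩ := exists_smul_eq_of_support_subset (LinearMap.mem_range_self _ y₀) hv0
        (by rwa [range_vecMulLinear]) (LinearMap.mem_range_self _ y)
        fun j hj => congrFun hy ⟨j, hj⟩
      exact ⟨c, vecMul_injective_iff.mpr hA (by simpa [smul_vecMul] using hc.symm)⟩
    · rintro ⟨c, rfl⟩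
      funext j
      simp [smul_vecMul, j.2]
  have := LinearMap.finrank_range_add_finrank_ker Bᵀ.mulVecLin
  rwa [hker, finrank_span_singleton hy₀, finrank_fin_fun, ← rank, rank_transpose,
    rank_eq_finrank_span_cols] at this

theorem exists_det_submatrix_snoc_eq_zero_iff [Fintype ι] {m : ℕ}
    {A : Matrix (Fin (m + 1)) ι K} (hA : LinearIndependent K A.row) {v : ι → K}
    (hv : v ∈ span K (Set.range A.row)) (hv0 : v ≠ 0)
    (hmin : IsSupportMinimal (span K (Set.range A.row)) v) :
    ∃ g : Fin m → ι, Function.Injective g ∧ (∀ k, v (g k) = 0) ∧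
      ∀ j, (A.submatrix id (Fin.snoc g j)).det = 0 ↔ v j = 0 := by
  obtain ⟨g, hg, hgli, hgspan⟩ := exists_linearIndependent_fin _
    (Nat.add_right_cancel (finrank_span_col_zero_add_one hA hv hv0 hmin))
  refine ⟨Subtype.val ∘ g, Subtype.val_injective.comp hg, fun k => (g k).2, fun j => ?_⟩
  rw [← det_transpose, transpose_submatrix_snoc]
  refine (det_of_snoc_eq_zero_iff hgli (A.col j)).trans ?_
  rw [hgspan]
  rw [← range_vecMulLinear] at hv
  obtain ⟨y₀, rfl⟩ : ∃ y₀, y₀ ᵥ* A = v := hv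
  have hle : span K (Set.range fun j : {j // (y₀ ᵥ* A) j = 0} => A.col j) ≤
      LinearMap.ker (dotProductBilin K K y₀) := span_le.mpr fun _ ⟨j, hj⟩ => hj ▸ j.2
  exact ⟨fun hj => hle hj, fun hvj => subset_span ⟨⟨j, hvj⟩, rfl⟩⟩

theorem exists_mem_span_row_of_unimodular {κ : Type*} [Finite κ] [Fintype ι] {r : ℕ}
    {M : Matrix κ ι K} (hrank : M.rank = r)
    (huni : ∀ (f : Fin r → κ) (g : Fin r → ι), Function.Injective f →
      Function.Injective g → (M.submatrix f g).det ∈ ({-1, 0, 1} : Set K))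
    {v : ι → K} (hv : v ∈ span K (Set.range M.row)) (hv0 : v ≠ 0)
    (hmin : IsSupportMinimal (span K (Set.range M.row)) v) :
    ∃ u ∈ span K (Set.range M.row), (∀ j, u j = 0 ↔ v j = 0) ∧
      ∀ j, u j ∈ ({-1, 0, 1} : Set K) := by
  obtain ⟨f, hf, hfli, hfspan⟩ :=
    exists_linearIndependent_fin M.row (by rw [← rank_eq_finrank_span_row, hrank])
  rw [← hfspan] at hv hmin ⊢
  obtain _ | m := r
  · exact absurd (by simpa [Set.range_eq_empty] using hv) hv0
  obtain ⟨g, hg, hgv, hdet⟩ :=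
    exists_det_submatrix_snoc_eq_zero_iff (A := M.submatrix f id) hfli hv hv0 hmin
  refine ⟨_, det_submatrix_snoc_mem_span_row _ g, hdet, fun j => ?_⟩
  by_cases hj : v j = 0
  · exact Or.inr (Or.inl ((hdet j).mpr hj))
  · exact huni f (Fin.snoc g j) hf
      (Fin.snoc_injective_iff.mpr ⟨hg, fun ⟨k, hk⟩ => hj (hk ▸ hgv k)⟩)

theorem eq_abs_smul_sign_of_eq_smul [LinearOrder K] [IsStrictOrderedRing K] {u v : ι → K}
    (hu : ∀ j, u j ∈ ({-1, 0, 1} : Set K)) {a : K} (ha : a ≠ 0) (hv : v = a • u) :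
    v = |a| • fun i => if 0 < v i then 1 else if v i < 0 then -1 else 0 := by
  subst hv
  funext j
  obtain h | h | h : u j = -1 ∨ u j = 0 ∨ u j = 1 := hu j
  all_goals rcases ha.lt_or_gt with ha | ha
  all_goals simp [h, ha, abs_of_neg, abs_of_pos, not_lt_of_gt]

end

theorem stmt7_general (d n r : ℕ) (M : Matrix (Fin d) (Fin n) ℝ)
    (hrank : M.rank = r)
    (huni : ∀ (f : Fin r → Fin d) (g : Fin r → Fin n),
      Function.Injective f → Function.Injective g →
      (M.submatrix f g).det ∈ ({-1, 0, 1} : Set ℝ))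
    (W : Submodule ℝ (Fin n → ℝ))
    (hW : W = Submodule.span ℝ (Set.range (fun i => M i)))
    (v : Fin n → ℝ) (hv : v ∈ W) (hv0 : v ≠ 0)
    (hmin : ∀ w ∈ W, w ≠ 0 → {i | w i ≠ 0} ⊆ {i | v i ≠ 0} → {i | w i ≠ 0} = {i | v i ≠ 0})
    (σ : Fin n → ℝ)
    (hσ : σ = fun i => if 0 < v i then 1 else if v i < 0 then -1 else 0) :
    σ ∈ W ∧ ∃ c : ℝ, 0 < c ∧ v = c • σ := by
  subst hW
  obtain ⟨u, hu, huv, hu₁⟩ := exists_mem_span_row_of_unimodular hrank huni hv hv0 hmin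
  obtain ⟨c, hc⟩ := exists_smul_eq_of_support_subset hv hv0 hmin hu fun j => (huv j).mpr
  have hc₀ : c ≠ 0 := by
    rintro rfl
    exact hv0 (funext fun j => (huv j).mp (by simp [hc]))
  have hvσ : v = |c⁻¹| • σ :=
    hσ ▸ eq_abs_smul_sign_of_eq_smul hu₁ (inv_ne_zero hc₀)
      (by rw [hc, inv_smul_smul₀ hc₀])
  have hpos : 0 < |c⁻¹| := abs_pos.mpr (inv_ne_zero hc₀)
  refine ⟨?_, |c⁻¹|, hpos, hvσ⟩
  rw [← inv_smul_smul₀ hpos.ne' σ, ← hvσ]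
  exact smul_mem _ _ hv

/-- For a rank `r` unimodular integer matrix `M`: if `v` is a nonzero vector of
the real row space of `M` whose support is minimal among supports of nonzero
vectors of the row space, then the coordinatewise sign vector `σ` of `v` also
lies in the row space, and `v` is a positive scalar multiple of `σ`. -/
theorem stmt7 (d n r : ℕ) (M : Matrix (Fin d) (Fin n) ℝ)
    (hint : ∀ i j, ∃ z : ℤ, M i j = (z : ℝ))
    (hrank : M.rank = r)
    (huni : ∀ (f : Fin r → Fin d) (g : Fin r → Fin n),
      Function.Injective f → Function.Injective g →
      (M.submatrix f g).det ∈ ({-1, 0, 1} : Set ℝ))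
    (W : Submodule ℝ (Fin n → ℝ))
    (hW : W = Submodule.span ℝ (Set.range (fun i => M i)))
    (v : Fin n → ℝ) (hv : v ∈ W) (hv0 : v ≠ 0)
    (hmin : ∀ w ∈ W, w ≠ 0 → {i | w i ≠ 0} ⊆ {i | v i ≠ 0} → {i | w i ≠ 0} = {i | v i ≠ 0})
    (σ : Fin n → ℝ)
    (hσ : σ = fun i => if 0 < v i then 1 else if v i < 0 then -1 else 0) :
    σ ∈ W ∧ ∃ c : ℝ, 0 < c ∧ v = c • σ :=
  stmt7_general d n r M hrank huni W hW v hv hv0 hmin σ hσ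
end

section
/- Let M be a d×n integer matrix of rank r all of whose r×r minors lie in {-1,0,1} (a unimodular matrix), and let L = M·Mᵀ. If S ⊆ {1,…,d} indexes a set of r linearly independent columns of L, then the subgroup of ℤ^d generated by the columns {L_i : i ∈ S} equals the subgroup of ℤ^d generated by all the columns of L. Consequently, for any two subsets S, T ⊆ {1,…,d} each indexing r linearly independent columns of L, the r-dimensional Hausdorff measures of the parallelepipeds Z(L_S) and Z(L_T) are equal (so the zonotope Z(L) decomposes into top-dimensional parallelepipeds all of the same volume). -/
/-!
Column `j` of `L = M Mᵀ` is `M` applied to row `j` of `M`, so it suffices to show that `r = rank M`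
independent rows `M_f` generate every row of `M` over `ℤ`. They span the row space, so
`M_j = aᵀ M_f` with `a` real; choosing columns `g` with `det M_{f,g} ≠ 0`, unimodularity forces
`det M_{f,g} = ±1`, hence `aᵀ = M_{j,g} M_{f,g}⁻¹` is integral.

Two bases of the same lattice differ by an integer matrix with an integer inverse, hence of
determinant `±1`. The `r`-dimensional Hausdorff measure of a linear image of `ℝ^r` scales by
`LinearMap.normDet`, which is multiplicative, so both parallelepipeds have the same volume.
-/

open MeasureTheory

/-- The zonotope generated by a `d × k` real matrix, viewed inside Euclidean
space `ℝ^d` (so that Hausdorff measures are taken w.r.t. the Euclidean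
metric): the image of the unit cube `[0,1]^k` under `x ↦ M x`. -/
def zonotopeE {d k : ℕ} (M : Matrix (Fin d) (Fin k) ℝ) : Set (EuclideanSpace ℝ (Fin d)) :=
  {y | ∃ x : Fin k → ℝ, (∀ i, x i ∈ Set.Icc (0 : ℝ) 1) ∧
    y = (WithLp.equiv 2 (Fin d → ℝ)).symm (M.mulVec x)}

open Module Set Function Matrix

theorem LinearIndependent.comp_orderEmbOfFin {ι R V : Type*} [LinearOrder ι] [Semiring R]
    [AddCommMonoid V] [Module R V] {v : ι → V} {s : Finset ι} {k : ℕ} (h : s.card = k)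
    (hv : LinearIndependent R fun j : s => v j) :
    LinearIndependent R (v ∘ s.orderEmbOfFin h) :=
  hv.comp (s.orderIsoOfFin h) (s.orderIsoOfFin h).injective

namespace Matrix

section Field

variable {K : Type*} [Field K] {m n : Type*} [Fintype n] {r : ℕ}

theorem exists_injective_det_submatrix_ne_zero (N : Matrix (Fin r) n K)
    (hN : LinearIndependent K N.row) :
    ∃ g : Fin r → n, Injective g ∧ (N.submatrix id g).det ≠ 0 := by
  have hcols : Submodule.span K (range N.col) = ⊤ := by
    apply Submodule.eq_top_of_finrank_eq
    rw [← rank_eq_finrank_span_cols, rank_eq_finrank_span_row, finrank_span_eq_card hN]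
    simp
  obtain ⟨κ, a, ha, hspan, hli⟩ := exists_linearIndependent' K N.col
  let e : κ ≃ Fin r :=
    (Basis.mk hli (by rw [hspan, hcols])).indexEquiv (Pi.basisFun K (Fin r))
  refine ⟨a ∘ e.symm, ha.comp e.symm.injective, ?_⟩
  have : LinearIndependent K (N.submatrix id (a ∘ e.symm)).col := hli.comp _ e.symm.injective
  exact ((isUnit_iff_isUnit_det _).1 (linearIndependent_cols_iff_isUnit.1 this)).ne_zero

theorem span_range_row_comp_eq [Finite m] (M : Matrix m n K) (hrank : M.rank = r)
    (f : Fin r → m) (hf : LinearIndependent K (M.row ∘ f)) :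
    Submodule.span K (range (M.row ∘ f)) = Submodule.span K (range M.row) := by
  apply Submodule.eq_of_le_of_finrank_eq (Submodule.span_mono (range_comp_subset_range _ _))
  rw [← rank_eq_finrank_span_row, hrank, finrank_span_eq_card hf, Fintype.card_fin]

end Field

section Unimodular

variable {m n : Type*} [Finite m] [Fintype n] {r : ℕ}

theorem row_mem_closure_range_row_comp (M : Matrix m n ℝ)
    (hint : ∀ i j, ∃ z : ℤ, M i j = (z : ℝ)) (hrank : M.rank = r)
    (huni : ∀ (f : Fin r → m) (g : Fin r → n), Injective f → Injective g →
      (M.submatrix f g).det ∈ ({-1, 0, 1} : Set ℝ))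
    (f : Fin r → m) (hf : LinearIndependent ℝ (M.row ∘ f)) (j : m) :
    M.row j ∈ AddSubgroup.closure (range (M.row ∘ f)) := by
  choose Mz hMz using hint
  set φ := (Int.castRingHom ℝ).mapMatrix (m := Fin r)
  obtain ⟨a, ha⟩ := (Submodule.mem_span_range_iff_exists_fun ℝ).1 <|
    (span_range_row_comp_eq M hrank f hf).ge (Submodule.subset_span (mem_range_self j))
  obtain ⟨g, hg, hdet⟩ := exists_injective_det_submatrix_ne_zero (M.submatrix f id) hf
  set Az : Matrix (Fin r) (Fin r) ℤ := of fun i k => Mz (f i) (g k)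
  have hA : M.submatrix f g = φ Az := by ext i k; exact hMz _ _
  have hAz : IsUnit Az.det := by
    have h := huni f g hf.injective.of_comp hg
    replace hdet : (M.submatrix f g).det ≠ 0 := hdet
    rw [hA, ← RingHom.map_det, eq_intCast] at h hdet
    rcases h with h | h | h
    · exact Int.isUnit_iff.2 (Or.inr (by exact_mod_cast h))
    · exact absurd h hdet
    · exact Int.isUnit_iff.2 (Or.inl (by exact_mod_cast (mem_singleton_iff.1 h)))
  have hvecMul : a ᵥ* φ Az = Int.cast ∘ (Mz j ∘ g) := by
    rw [← hA]
    ext k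
    simpa [vecMul, dotProduct, Finset.sum_apply, mul_comm, hMz] using congrFun ha (g k)
  have ha_int : a = Int.cast ∘ (Mz j ∘ g ᵥ* Az⁻¹) := by
    have hinv : φ Az * φ Az⁻¹ = 1 := by rw [← map_mul, mul_nonsing_inv _ hAz, map_one]
    ext i
    rw [← vecMul_one a, ← hinv, ← vecMul_vecMul, hvecMul, Function.comp_apply]
    exact (RingHom.map_vecMul (Int.castRingHom ℝ) _ _ i).symm
  rw [← ha, ha_int]
  refine AddSubgroup.sum_mem _ fun i _ => ?_
  rw [Function.comp_apply, Int.cast_smul_eq_zsmul]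
  exact AddSubgroup.zsmul_mem _ (AddSubgroup.subset_closure (mem_range_self i)) _

omit [Finite m] in
theorem col_mul_transpose (M : Matrix m n ℝ) : (M * Mᵀ).col = M.mulVecLin ∘ M.row := by
  ext j i
  simp [mul_apply, mulVec, dotProduct]

theorem closure_range_col_mul_transpose_comp (M : Matrix m n ℝ)
    (hint : ∀ i j, ∃ z : ℤ, M i j = (z : ℝ)) (hrank : M.rank = r)
    (huni : ∀ (f : Fin r → m) (g : Fin r → n), Injective f → Injective g →
      (M.submatrix f g).det ∈ ({-1, 0, 1} : Set ℝ))
    (f : Fin r → m) (hf : LinearIndependent ℝ ((M * Mᵀ).col ∘ f)) :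
    AddSubgroup.closure (range ((M * Mᵀ).col ∘ f)) =
      AddSubgroup.closure (range (M * Mᵀ).col) := by
  rw [col_mul_transpose] at hf ⊢
  refine le_antisymm (AddSubgroup.closure_mono (range_comp_subset_range _ _)) ?_
  rw [AddSubgroup.closure_le]
  rintro _ ⟨j, rfl⟩
  have := AddSubgroup.mem_map_of_mem M.mulVecLin.toAddMonoidHom
    (row_mem_closure_range_row_comp M hint hrank huni f hf.of_comp j)
  rwa [AddMonoidHom.map_closure, ← range_comp] at this

end Unimodular

section Lattice

variable {m ι : Type*} [Fintype ι] [DecidableEq ι]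

theorem exists_intCast_mul_eq_of_range_col_subset (A B : Matrix m ι ℝ)
    (h : range B.col ⊆ AddSubgroup.closure (range A.col)) :
    ∃ U : Matrix ι ι ℤ, B = A * (Int.castRingHom ℝ).mapMatrix U := by
  choose c hc using fun j => AddSubgroup.mem_closure_range_iff_of_fintype.1 (h (mem_range_self j))
  refine ⟨of fun i j => c j i, ?_⟩
  ext k j
  simpa [mul_apply, Finset.sum_apply, mul_comm] using congrFun (hc j) k

omit [DecidableEq ι] in
theorem eq_of_mul_eq_mul_of_linearIndependent_col {n : Type*} [Fintype n] [DecidableEq n]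
    {A : Matrix m ι ℝ} (hA : LinearIndependent ℝ A.col) {X Y : Matrix ι n ℝ}
    (h : A * X = A * Y) : X = Y :=
  ext_of_mulVec_single fun i => mulVec_injective_iff.2 hA <| by
    rw [mulVec_mulVec, mulVec_mulVec, h]

theorem exists_abs_det_eq_one_of_closure_range_col_eq (A B : Matrix m ι ℝ)
    (hA : LinearIndependent ℝ A.col)
    (h : AddSubgroup.closure (range A.col) = AddSubgroup.closure (range B.col)) :
    ∃ U : Matrix ι ι ℝ, B = A * U ∧ |U.det| = 1 := by
  set φ := (Int.castRingHom ℝ).mapMatrix (m := ι)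
  obtain ⟨U, hU⟩ := exists_intCast_mul_eq_of_range_col_subset A B (h ▸ AddSubgroup.subset_closure)
  obtain ⟨V, hV⟩ := exists_intCast_mul_eq_of_range_col_subset B A (h ▸ AddSubgroup.subset_closure)
  have hUV : U * V = 1 := by
    have : φ (U * V) = φ 1 := eq_of_mul_eq_mul_of_linearIndependent_col hA <| by
      rw [map_mul, ← Matrix.mul_assoc, ← hU, ← hV, map_one, Matrix.mul_one]
    exact Matrix.map_injective Int.cast_injective this
  refine ⟨φ U, hU, ?_⟩
  rw [← RingHom.map_det, eq_intCast, ← Int.cast_abs,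
    Int.isUnit_iff_abs_eq.1 (isUnit_det_of_right_inverse hUV), Int.cast_one]

end Lattice

end Matrix

open WithLp in
theorem zonotopeE_eq_image {d k : ℕ} (W : Matrix (Fin d) (Fin k) ℝ) :
    zonotopeE W = W.toEuclideanLin '' {x | ∀ i, x i ∈ Icc (0 : ℝ) 1} := by
  ext y
  constructor
  · rintro ⟨x, hx, rfl⟩
    exact ⟨toLp 2 x, hx, rfl⟩
  · rintro ⟨x, hx, rfl⟩
    exact ⟨ofLp x, hx, rfl⟩

theorem hausdorffMeasure_zonotopeE_mul {d k : ℕ} (A : Matrix (Fin d) (Fin k) ℝ)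
    (U : Matrix (Fin k) (Fin k) ℝ) (hU : |U.det| = 1) :
    μH[k] (zonotopeE (A * U)) = μH[k] (zonotopeE A) := by
  have himage := @LinearMap.hausdorffMeasure_image (EuclideanSpace ℝ (Fin k))
    (EuclideanSpace ℝ (Fin d)) _ _ _ _ _ _ _ _ _
  rw [finrank_euclideanSpace_fin] at himage
  rw [zonotopeE_eq_image, zonotopeE_eq_image, himage, himage, toLpLin_mul_same,
    LinearMap.normDet_comp_of_finrank_eq _ _ rfl, LinearMap.normDet_eq_abs_det,
    LinearMap.det_toLpLin, hU, mul_one]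

theorem hausdorffMeasure_zonotopeE_eq_of_closure_range_col_eq {d r : ℕ}
    (A B : Matrix (Fin d) (Fin r) ℝ) (hA : LinearIndependent ℝ A.col)
    (h : AddSubgroup.closure (range A.col) = AddSubgroup.closure (range B.col)) :
    μH[r] (zonotopeE A) = μH[r] (zonotopeE B) := by
  obtain ⟨U, rfl, hU⟩ := exists_abs_det_eq_one_of_closure_range_col_eq A B hA h
  exact (hausdorffMeasure_zonotopeE_mul A U hU).symm

/-- For a rank `r` unimodular integer matrix `M` with `L = M Mᵀ`: any `r`
linearly independent columns of `L` generate the same subgroup of `ℤ^d` as all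
the columns of `L`; consequently any two parallelepipeds spanned by `r`
linearly independent columns of `L` have the same `r`-dimensional Hausdorff
measure (so `Z(L)` decomposes into top-dimensional parallelepipeds all of the
same volume). -/
theorem stmt11 (d n r : ℕ) (M : Matrix (Fin d) (Fin n) ℝ)
    (hint : ∀ i j, ∃ z : ℤ, M i j = (z : ℝ))
    (hrank : M.rank = r)
    (huni : ∀ (f : Fin r → Fin d) (g : Fin r → Fin n),
      Function.Injective f → Function.Injective g →
      (M.submatrix f g).det ∈ ({-1, 0, 1} : Set ℝ))
    (L : Matrix (Fin d) (Fin d) ℝ) (hLdef : L = M * M.transpose)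
    (S : Finset (Fin d)) (hScard : S.card = r)
    (hSind : LinearIndependent ℝ (fun j : S => fun i => L i j))
    (T : Finset (Fin d)) (hTcard : T.card = r)
    (hTind : LinearIndependent ℝ (fun j : T => fun i => L i j)) :
    AddSubgroup.closure ((fun j => fun i => L i j) '' (S : Set (Fin d))) =
      AddSubgroup.closure (Set.range (fun j => fun i => L i j)) ∧
    μH[(r : ℝ)] (zonotopeE (L.submatrix id (S.orderEmbOfFin hScard))) =
      μH[(r : ℝ)] (zonotopeE (L.submatrix id (T.orderEmbOfFin hTcard))) := by
  have hcol (f : Fin r → Fin d) : (L.submatrix id f).col = L.col ∘ f := rfl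
  have hclosure (U : Finset (Fin d)) (hU : U.card = r)
      (hind : LinearIndependent ℝ (fun j : U => fun i => L i j)) :
      AddSubgroup.closure (range (L.col ∘ U.orderEmbOfFin hU)) =
        AddSubgroup.closure (range L.col) := by
    subst hLdef
    exact closure_range_col_mul_transpose_comp M hint hrank huni _ (hind.comp_orderEmbOfFin hU)
  have hS := hclosure S hScard hSind
  refine ⟨?_, hausdorffMeasure_zonotopeE_eq_of_closure_range_col_eq _ _ ?_ ?_⟩
  · rwa [range_comp, Finset.range_orderEmbOfFin] at hS
  · rw [hcol]
    exact hSind.comp_orderEmbOfFin hScard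
  · rw [hcol, hcol, hS, hclosure T hTcard hTind]
end

section
/- Let 𝓛 ⊆ ℤⁿ be a subgroup with the property that for every nonzero v ∈ 𝓛 there exists an elementary vector u ∈ 𝓛 with supp(u) ⊆ supp(v) (i.e., 𝓛 is a zonotopal lattice). Then: (1) every v ∈ 𝓛 can be written as a sum of pairwise conformal elementary vectors of 𝓛; and (2) if v ∈ 𝓛 has supp(v) = supp(u) for some elementary vector u ∈ 𝓛, then v is a scalar multiple of u. -/
def IsElementaryLat {n : ℕ} (𝓛 : AddSubgroup (Fin n → ℤ)) (u : Fin n → ℤ) : Prop :=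
  u ∈ 𝓛 ∧ u ≠ 0 ∧ (∀ i, u i ∈ ({-1, 0, 1} : Set ℤ)) ∧
    ∀ w ∈ 𝓛, w ≠ 0 → {i | w i ≠ 0} ⊆ {i | u i ≠ 0} → {i | w i ≠ 0} = {i | u i ≠ 0}

section Aux
variable {n : ℕ} {𝓛 : AddSubgroup (Fin n → ℤ)}

lemma elem_neg {u : Fin n → ℤ} (h : IsElementaryLat 𝓛 u) : IsElementaryLat 𝓛 (-u) := by
  obtain ⟨hm, h0, hc, hmin⟩ := h
  refine ⟨neg_mem hm, neg_ne_zero.mpr h0, ?_, ?_⟩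
  · intro i
    rcases hc i with h | h | h <;>
      simp_all [Pi.neg_apply, Set.mem_insert_iff, Set.mem_singleton_iff]
  · have hs : {i | (-u) i ≠ 0} = {i | u i ≠ 0} := by ext i; simp
    rw [hs]; exact hmin

lemma sign_transfer {a b c : ℤ} (h1 : 0 < a * b) (h2 : 0 ≤ a * c) : 0 ≤ b * c := by
  have ha : a ≠ 0 := by rintro rfl; simp at h1
  have ha2 : 0 < a * a := mul_self_pos.mpr ha
  nlinarith [mul_nonneg h1.le h2]

lemma pos_of_nonneg_ne {a b : ℤ} (h : 0 ≤ a * b) (ha : a ≠ 0) (hb : b ≠ 0) :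
    0 < a * b := lt_of_le_of_ne h (Ne.symm (mul_ne_zero ha hb))

/-- Key lemma A: existence of a conformal elementary vector. -/
lemma exists_conf_elem
    (hzono : ∀ v ∈ 𝓛, v ≠ 0 → ∃ u, IsElementaryLat 𝓛 u ∧
      {i | u i ≠ 0} ⊆ {i | v i ≠ 0}) :
    ∀ v ∈ 𝓛, v ≠ 0 → ∃ u, IsElementaryLat 𝓛 u ∧ {i | u i ≠ 0} ⊆ {i | v i ≠ 0} ∧
      ∀ i, 0 ≤ u i * v i := by
  suffices h : ∀ N : ℕ, ∀ v, v ∈ 𝓛 → v ≠ 0 →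
      (Finset.univ.filter fun i => v i ≠ 0).card ≤ N →
      ∃ u, IsElementaryLat 𝓛 u ∧ {i | u i ≠ 0} ⊆ {i | v i ≠ 0} ∧ ∀ i, 0 ≤ u i * v i by
    exact fun v hv h0 => h _ v hv h0 le_rfl
  intro N
  induction N with
  | zero =>
    intro v hv h0 hcard
    exfalso
    apply h0
    funext i
    show v i = 0
    by_contra hvi
    have : i ∈ Finset.univ.filter fun i => v i ≠ 0 := by simp [hvi]
    have := Finset.card_pos.mpr ⟨i, this⟩
    omega
  | succ N ih =>
    intro v hv h0 hcard
    obtain ⟨u, hu, hsub⟩ := hzono v hv h0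
    by_cases hconf : ∀ i, 0 ≤ u i * v i
    · exact ⟨u, hu, hsub, hconf⟩
    push_neg at hconf
    have hBne : (Finset.univ.filter fun i => u i * v i < 0).Nonempty := by
      obtain ⟨i, hi⟩ := hconf; exact ⟨i, by simp [hi]⟩
    obtain ⟨i₀, hi₀B, hi₀min⟩ :=
      Finset.exists_min_image _ (fun i => (v i).natAbs) hBne
    have hbad₀ : u i₀ * v i₀ < 0 := by simpa using hi₀B
    have hu0 : u i₀ ≠ 0 := by rintro h; rw [h] at hbad₀; simp at hbad₀
    have hs₀ : u i₀ = 1 ∨ u i₀ = -1 := by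
      rcases hu.2.2.1 i₀ with h | h | h <;> simp_all
    set c : ℤ := v i₀ * u i₀ with hcdef
    have hc_neg : c < 0 := by rw [hcdef, mul_comm]; exact hbad₀
    set w : Fin n → ℤ := v - c • u with hwdef
    have hwi : ∀ i, w i = v i - c * u i := by
      intro i; simp [hwdef, Pi.sub_apply, Pi.smul_apply, smul_eq_mul]
    have hw : w ∈ 𝓛 := sub_mem hv (AddSubgroup.zsmul_mem 𝓛 hu.1 c)
    have hwi₀ : w i₀ = 0 := by
      rw [hwi, hcdef]; rcases hs₀ with h | h <;> rw [h] <;> ring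
    have hsubw : ∀ i, w i ≠ 0 → v i ≠ 0 := by
      intro i h
      rcases eq_or_ne (v i) 0 with hvi | hvi
      · exfalso
        have hui : u i = 0 := by
          by_contra hui
          exact (hsub hui : v i ≠ 0) hvi
        rw [hwi, hvi, hui] at h; simp at h
      · exact hvi
    by_cases hw0 : w = 0
    · -- v = c • u with c < 0, so -u works
      have hvcu : ∀ i, v i = c * u i := by
        intro i
        have h' : v i - c * u i = 0 := by simpa [hwi] using congrFun hw0 i
        linarith
      refine ⟨-u, elem_neg hu, ?_, ?_⟩
      · have : {i | (-u) i ≠ 0} = {i | u i ≠ 0} := by ext i; simp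
        rw [this]; exact hsub
      · intro i
        rw [hvcu i]
        have : (-u) i * (c * u i) = (-c) * (u i * u i) := by simp; ring
        rw [this]
        exact mul_nonneg (by linarith) (mul_self_nonneg _)
    · -- recurse on w
      have hvi₀ : v i₀ ≠ 0 := by
        rintro h; rw [h] at hbad₀; simp at hbad₀
      have hcardw : (Finset.univ.filter fun i => w i ≠ 0).card ≤ N := by
        have hss : (Finset.univ.filter fun i => w i ≠ 0) ⊂
            (Finset.univ.filter fun i => v i ≠ 0) := by
          refine ⟨fun i hi => ?_, fun hsup => ?_⟩
          · simp only [Finset.mem_filter, Finset.mem_univ, true_and] at hi ⊢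
            exact hsubw i hi
          · have := hsup (by simp [hvi₀] : i₀ ∈ Finset.univ.filter fun i => v i ≠ 0)
            simp only [Finset.mem_filter, Finset.mem_univ, true_and] at this
            exact this hwi₀
        have := Finset.card_lt_card hss
        omega
      obtain ⟨u', hu', hsub', hconf'⟩ := ih w hw hw0 hcardw
      refine ⟨u', hu', fun i hi => hsubw i (hsub' hi), ?_⟩
      intro i
      by_cases hui' : u' i = 0
      · simp [hui']
      have hwine : w i ≠ 0 := hsub' hui'
      have h1 : 0 < u' i * w i := pos_of_nonneg_ne (hconf' i) hui' hwine
      -- key : 0 ≤ w i * v i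
      have h2 : 0 ≤ w i * v i := by
        rw [hwi]
        rcases hu.2.2.1 i with h | h | h
        · -- u i = -1
          have hvine : v i ≠ 0 := hsub (by rw [h]; norm_num : u i ≠ 0)
          by_cases hb : u i * v i < 0
          · have hmin := hi₀min i (by simp [hb])
            have habs : -c ≤ |v i| := by
              have h1 : |c| = |v i₀| := by
                rw [hcdef]; rcases hs₀ with h' | h' <;> rw [h'] <;> simp [abs_mul]
              have h2 : |v i₀| ≤ |v i| := by
                rw [Int.abs_eq_natAbs, Int.abs_eq_natAbs]; exact_mod_cast hmin
              have h3 : |c| = -c := abs_of_neg hc_neg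
              linarith
            rw [h] at hb ⊢
            have hvpos : 0 < v i := by nlinarith
            have : |v i| = v i := abs_of_pos hvpos
            nlinarith
          · push_neg at hb
            nlinarith [mul_nonneg (neg_nonneg.mpr hc_neg.le) hb, sq_nonneg (v i)]
        · rw [h]; nlinarith [sq_nonneg (v i)]
        · -- u i = 1
          simp only [Set.mem_singleton_iff] at h
          have hvine : v i ≠ 0 := hsub (by rw [h]; norm_num : u i ≠ 0)
          by_cases hb : u i * v i < 0
          · have hmin := hi₀min i (by simp [hb])
            have habs : -c ≤ |v i| := by
              have h1 : |c| = |v i₀| := by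
                rw [hcdef]; rcases hs₀ with h' | h' <;> rw [h'] <;> simp [abs_mul]
              have h2 : |v i₀| ≤ |v i| := by
                rw [Int.abs_eq_natAbs, Int.abs_eq_natAbs]; exact_mod_cast hmin
              have h3 : |c| = -c := abs_of_neg hc_neg
              linarith
            rw [h] at hb ⊢
            have hvneg : v i < 0 := by nlinarith
            have : |v i| = -v i := abs_of_neg hvneg
            nlinarith
          · push_neg at hb
            nlinarith [mul_nonneg (neg_nonneg.mpr hc_neg.le) hb, sq_nonneg (v i)]
      exact sign_transfer (by rw [mul_comm]; exact h1) h2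


/-- Key lemma B: conformal decomposition into elementary vectors. -/
lemma decomp
    (hzono : ∀ v ∈ 𝓛, v ≠ 0 → ∃ u, IsElementaryLat 𝓛 u ∧
      {i | u i ≠ 0} ⊆ {i | v i ≠ 0}) :
    ∀ v ∈ 𝓛, ∃ (k : ℕ) (u : Fin k → (Fin n → ℤ)),
      (∀ j, IsElementaryLat 𝓛 (u j)) ∧
      (∀ j j', ∀ i, 0 ≤ u j i * u j' i) ∧
      v = ∑ j, u j := by
  suffices h : ∀ N : ℕ, ∀ v, v ∈ 𝓛 → (∑ i, (v i).natAbs) ≤ N →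
      ∃ (k : ℕ) (u : Fin k → (Fin n → ℤ)),
        (∀ j, IsElementaryLat 𝓛 (u j)) ∧
        (∀ j j', ∀ i, 0 ≤ u j i * u j' i) ∧
        v = ∑ j, u j by
    exact fun v hv => h _ v hv le_rfl
  intro N
  induction N with
  | zero =>
    intro v hv hN
    have hv0 : v = 0 := by
      funext i
      show v i = 0
      have : (v i).natAbs = 0 := by
        have := Finset.sum_le_sum_of_subset (Finset.subset_univ {i})
          (f := fun i => (v i).natAbs)
        simp only [Finset.sum_singleton] at this
        omega
      omega
    exact ⟨0, Fin.elim0, fun j => j.elim0, fun j => j.elim0, by simp [hv0]⟩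
  | succ N ih =>
    intro v hv hN
    by_cases h0 : v = 0
    · exact ⟨0, Fin.elim0, fun j => j.elim0, fun j => j.elim0, by simp [h0]⟩
    obtain ⟨u, hu, hsub, hconf⟩ := exists_conf_elem hzono v hv h0
    set w : Fin n → ℤ := v - u with hwdef
    have hwi : ∀ i, w i = v i - u i := fun i => rfl
    have hw : w ∈ 𝓛 := sub_mem hv hu.1
    -- pointwise measure facts
    have hpt : ∀ i, (w i).natAbs ≤ (v i).natAbs ∧
        (u i ≠ 0 → (w i).natAbs < (v i).natAbs) := by
      intro i
      have hwieq : w i = v i - u i := hwi i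
      rcases hu.2.2.1 i with h | h | h
      · -- u i = -1
        have hvine : v i ≠ 0 := hsub (by rw [h]; norm_num : u i ≠ 0)
        have hc := hconf i
        rw [h] at hc
        have hvneg : v i < 0 := by
          rcases lt_trichotomy (v i) 0 with h' | h' | h'
          · exact h'
          · exact absurd h' hvine
          · nlinarith
        rw [hwieq, h]
        exact ⟨by omega, fun _ => by omega⟩
      · exact ⟨by rw [hwieq, h]; omega, fun h' => absurd h h'⟩
      · -- u i = 1
        rw [Set.mem_singleton_iff] at h
        have hvine : v i ≠ 0 := hsub (by rw [h]; norm_num : u i ≠ 0)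
        have hc := hconf i
        rw [h] at hc
        have hvpos : 0 < v i := by
          rcases lt_trichotomy (v i) 0 with h' | h' | h'
          · nlinarith
          · exact absurd h' hvine
          · exact h'
        rw [hwieq, h]
        exact ⟨by omega, fun _ => by omega⟩
    have hex : ∃ i, u i ≠ 0 := by
      by_contra hc
      push_neg at hc
      exact hu.2.1 (funext fun i => hc i)
    obtain ⟨i₁, hi₁⟩ := hex
    have hsumlt : (∑ i, (w i).natAbs) < ∑ i, (v i).natAbs := by
      apply Finset.sum_lt_sum (fun i _ => (hpt i).1)
      exact ⟨i₁, Finset.mem_univ _, (hpt i₁).2 hi₁⟩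
    obtain ⟨k, us, helem, hpair, hsum⟩ := ih w hw (by omega)
    -- each member of the family is conformal with u
    have hkey : ∀ j i, 0 ≤ us j i * u i := by
      intro j i
      by_cases hji : us j i = 0
      · simp [hji]
      have hwju : 0 < w i * us j i := by
        have heq : w i * us j i = ∑ j', us j' i * us j i := by
          have : w i = ∑ j', us j' i := by
            rw [hsum]; simp [Finset.sum_apply]
          rw [this, Finset.sum_mul]
        rw [heq]
        refine Finset.sum_pos' (fun j' _ => hpair j' j i) ⟨j, Finset.mem_univ j, ?_⟩
        exact mul_self_pos.mpr hji
      have hwu : 0 ≤ w i * u i := by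
        by_cases hui : u i = 0
        · simp [hui]
        have hvine : v i ≠ 0 := hsub hui
        have h1 : 0 < u i * v i := pos_of_nonneg_ne (hconf i) hui hvine
        have hsq : u i * u i = 1 := by
          rcases hu.2.2.1 i with h | h | h
          · rw [h]; ring
          · exact absurd h hui
          · rw [Set.mem_singleton_iff] at h; rw [h]; ring
        have h2 : 1 ≤ u i * v i := h1
        rw [hwi]
        nlinarith
      exact sign_transfer hwju hwu
    refine ⟨k + 1, Fin.cons u us, ?_, ?_, ?_⟩
    · intro j
      rcases Fin.eq_zero_or_eq_succ j with rfl | ⟨j₁, rfl⟩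
      · simpa using hu
      · simpa using helem j₁
    · intro j j' i
      rcases Fin.eq_zero_or_eq_succ j with rfl | ⟨j₁, rfl⟩ <;>
        rcases Fin.eq_zero_or_eq_succ j' with rfl | ⟨j₂, rfl⟩
      · simpa using mul_self_nonneg (u i)
      · simp only [Fin.cons_zero, Fin.cons_succ]
        rw [mul_comm]; exact hkey j₂ i
      · simp only [Fin.cons_zero, Fin.cons_succ]
        exact hkey j₁ i
      · simp only [Fin.cons_succ]
        exact hpair j₁ j₂ i
    · rw [Fin.sum_cons, ← hsum]
      funext i
      simp [hwi]

end Aux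

/-- **Zonotopal lattices are generated by their elementary vectors.**
If `𝓛 ⊆ ℤⁿ` is a zonotopal lattice, i.e. every nonzero `v ∈ 𝓛` has an
elementary vector `u ∈ 𝓛` with `supp u ⊆ supp v`, then (1) every `v ∈ 𝓛` is a
sum of pairwise conformal elementary vectors of `𝓛`, and (2) any `v ∈ 𝓛` whose
support equals the support of an elementary vector `u` is a scalar multiple of
`u`. -/
theorem stmt18 (n : ℕ) (𝓛 : AddSubgroup (Fin n → ℤ))
    (hzono : ∀ v ∈ 𝓛, v ≠ 0 → ∃ u, IsElementaryLat 𝓛 u ∧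
      {i | u i ≠ 0} ⊆ {i | v i ≠ 0}) :
    (∀ v ∈ 𝓛, ∃ (k : ℕ) (u : Fin k → (Fin n → ℤ)),
      (∀ j, IsElementaryLat 𝓛 (u j)) ∧
      (∀ j j', ∀ i, 0 ≤ u j i * u j' i) ∧
      v = ∑ j, u j) ∧
    (∀ v ∈ 𝓛, ∀ u, IsElementaryLat 𝓛 u →
      {i | v i ≠ 0} = {i | u i ≠ 0} → ∃ c : ℤ, v = c • u) := by
  constructor
  · exact decomp hzono
  · intro v hv u hu hsupp
    obtain ⟨i₀, hi₀⟩ : ∃ i, u i ≠ 0 := by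
      by_contra hc
      push_neg at hc
      exact hu.2.1 (funext fun i => hc i)
    have hs₀ : u i₀ = 1 ∨ u i₀ = -1 := by
      rcases hu.2.2.1 i₀ with h | h | h
      · exact Or.inr h
      · exact absurd h hi₀
      · rw [Set.mem_singleton_iff] at h; exact Or.inl h
    refine ⟨v i₀ * u i₀, ?_⟩
    set c : ℤ := v i₀ * u i₀ with hcdef
    set w : Fin n → ℤ := v - c • u with hwdef
    have hwi : ∀ i, w i = v i - c * u i := by
      intro i; simp [hwdef, Pi.sub_apply, Pi.smul_apply, smul_eq_mul]
    have hw : w ∈ 𝓛 := sub_mem hv (AddSubgroup.zsmul_mem 𝓛 hu.1 c)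
    have hwi₀ : w i₀ = 0 := by
      rw [hwi, hcdef]; rcases hs₀ with h | h <;> rw [h] <;> ring
    have hw0 : w = 0 := by
      by_contra hw0
      obtain ⟨u', hu', hsub'⟩ := hzono w hw hw0
      have hsubu : {i | u' i ≠ 0} ⊆ {i | u i ≠ 0} := by
        intro i hi
        have hwine : w i ≠ 0 := hsub' hi
        by_contra hui
        simp only [Set.mem_setOf_eq, not_not] at hui
        have hvi : v i = 0 := by
          by_contra hvi
          have hmem : i ∈ {i | u i ≠ 0} :=
            hsupp ▸ (show i ∈ {i | v i ≠ 0} from hvi)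
          exact hmem hui
        rw [hwi, hvi, hui] at hwine
        simp at hwine
      have heq := hu.2.2.2 u' hu'.1 hu'.2.1 hsubu
      have : u' i₀ ≠ 0 := by
        rw [← Set.mem_setOf_eq (p := fun i => u' i ≠ 0), heq]
        exact hi₀
      have : w i₀ ≠ 0 := hsub' this
      exact this hwi₀
    funext i
    have h' : v i - c * u i = 0 := by simpa [hwi] using congrFun hw0 i
    have : (c • u) i = c * u i := by simp [Pi.smul_apply, smul_eq_mul]
    rw [this]
    linarith
end
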